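/- For a Gaussian random vector ε ~ N(0, Σ) with Σ positive definite and a continuously differentiable function g: ℝ^h → ℝ^m with E[‖∇g(ε)‖] < ∞, Stein's identity holds componentwise: E[g(ε) εᵀ] = E[J_g(ε)] Σ, where J_g is the Jacobian of g. -/

import Mathlib

/-!
Write `ρ` for the density of `N(0, S)`. Its directional derivatives are
`∂ᵥρ(x) = -(v ⬝ S⁻¹x) ρ(x)`, so integration by parts (no boundary terms, everything being
integrable) gives `E[f(ε) (v ⬝ S⁻¹ε)] = E[∂ᵥf(ε)]`. Taking `v = eₖ` and expanding
`εⱼ = ∑ₖ (S⁻¹ε)ₖ Sₖⱼ` yields the identity. Integrability of `ρ` comes from the coercivity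
`x ⬝ S⁻¹x ≥ c ‖x‖²` of a positive definite form, and that of `g ρ`, which the integration by
parts needs, from `|g| ≤ max_{‖x‖ ≤ 1} |g| + ∑ⱼ |g xⱼ|`.
-/

open Matrix MeasureTheory

theorem exists_pos_mul_norm_sq_le {E : Type*} [NormedAddCommGroup E] [NormedSpace ℝ E]
    [FiniteDimensional ℝ E] {q : E → ℝ} (hq : Continuous q) (hpos : ∀ x ≠ 0, 0 < q x)
    (hsmul : ∀ (t : ℝ) (x : E), q (t • x) = t ^ 2 * q x) :
    ∃ c > 0, ∀ x, c * ‖x‖ ^ 2 ≤ q x := by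
  have hq0 : q 0 = 0 := by simpa using hsmul 0 0
  rcases subsingleton_or_nontrivial E with hE | hE
  · exact ⟨1, one_pos, fun x => by simp [Subsingleton.elim x 0, hq0]⟩
  obtain ⟨x₀, hx₀, hmin⟩ := (isCompact_sphere (0 : E) 1).exists_isMinOn
    (NormedSpace.sphere_nonempty.2 zero_le_one) hq.continuousOn
  refine ⟨q x₀, hpos x₀ (ne_zero_of_mem_unit_sphere ⟨x₀, hx₀⟩), fun x => ?_⟩
  rcases eq_or_ne x 0 with rfl | hx
  · simp [hq0]
  have hu : ‖x‖⁻¹ • x ∈ Metric.sphere (0 : E) 1 := by simp [norm_smul, hx]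
  calc q x₀ * ‖x‖ ^ 2 ≤ q (‖x‖⁻¹ • x) * ‖x‖ ^ 2 := by gcongr; exact hmin hu
    _ = q x := by rw [hsmul]; field_simp

namespace Matrix

variable {ι : Type*} [Fintype ι]

theorem PosDef.exists_pos_mul_sum_sq_le {A : Matrix ι ι ℝ} (hA : A.PosDef) :
    ∃ c > 0, ∀ x : ι → ℝ, c * ∑ i, x i ^ 2 ≤ x ⬝ᵥ A *ᵥ x := by
  obtain ⟨c, hc, hq⟩ := exists_pos_mul_norm_sq_le (E := EuclideanSpace ℝ ι)
    (q := fun x => x.ofLp ⬝ᵥ A *ᵥ x.ofLp) (by fun_prop)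
    (fun x hx => by simpa using hA.dotProduct_mulVec_pos (x := x.ofLp) (by simpa using hx))
    (fun t x => by
      simp only [WithLp.ofLp_smul, mulVec_smul, dotProduct_smul, smul_dotProduct, smul_eq_mul]
      ring)
  exact ⟨c, hc, fun x => by simpa [EuclideanSpace.norm_sq_eq] using hq (WithLp.toLp 2 x)⟩

theorem dotProduct_mulVec_add_smul {R : Type*} [CommRing R] (A : Matrix ι ι R) (x v : ι → R)
    (t : R) :
    (x + t • v) ⬝ᵥ A *ᵥ (x + t • v) =
      x ⬝ᵥ A *ᵥ x + t * (v ⬝ᵥ A *ᵥ x + x ⬝ᵥ A *ᵥ v) + t ^ 2 * (v ⬝ᵥ A *ᵥ v) := by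
  simp only [mulVec_add, mulVec_smul, dotProduct_add, add_dotProduct, dotProduct_smul,
    smul_dotProduct, smul_eq_mul]
  ring

theorem hasLineDerivAt_dotProduct_mulVec (A : Matrix ι ι ℝ) (x v : ι → ℝ) :
    HasLineDerivAt ℝ (fun x => x ⬝ᵥ A *ᵥ x) (v ⬝ᵥ A *ᵥ x + x ⬝ᵥ A *ᵥ v) x v := by
  have := (((hasDerivAt_id (0 : ℝ)).mul_const (v ⬝ᵥ A *ᵥ x + x ⬝ᵥ A *ᵥ v)).add
    ((hasDerivAt_pow 2 (0 : ℝ)).mul_const (v ⬝ᵥ A *ᵥ v))).const_add (x ⬝ᵥ A *ᵥ x)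
  unfold HasLineDerivAt
  simp_rw [dotProduct_mulVec_add_smul]
  convert this using 1
  · funext t
    simp only [id, Pi.add_apply]
    ring
  · simp

theorem IsSymm.dotProduct_mulVec_comm {R : Type*} [CommSemiring R] {A : Matrix ι ι R}
    (hA : A.IsSymm) (x v : ι → R) :
    x ⬝ᵥ A *ᵥ v = v ⬝ᵥ A *ᵥ x := by
  rw [dotProduct_mulVec, ← mulVec_transpose, hA.eq, dotProduct_comm]

end Matrix

section WithDensity

variable {α : Type*} [MeasurableSpace α] {μ : Measure α} {ρ : α → ℝ}

theorem integrable_withDensity_ofReal_iff (hρ : Measurable ρ) (hρ0 : ∀ x, 0 ≤ ρ x)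
    {φ : α → ℝ} :
    Integrable φ (μ.withDensity fun x => ENNReal.ofReal (ρ x)) ↔
      Integrable (fun x => φ x * ρ x) μ := by
  rw [integrable_withDensity_iff hρ.ennreal_ofReal (ae_of_all _ fun _ => ENNReal.ofReal_lt_top)]
  simp_rw [ENNReal.toReal_ofReal (hρ0 _)]

theorem integral_withDensity_ofReal (hρ : Measurable ρ) (hρ0 : ∀ x, 0 ≤ ρ x) (φ : α → ℝ) :
    ∫ x, φ x ∂μ.withDensity (fun x => ENNReal.ofReal (ρ x)) = ∫ x, φ x * ρ x ∂μ := by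
  rw [integral_withDensity_eq_integral_toReal_smul hρ.ennreal_ofReal
    (ae_of_all _ fun _ => ENNReal.ofReal_lt_top)]
  simp_rw [ENNReal.toReal_ofReal (hρ0 _), smul_eq_mul, mul_comm]

end WithDensity

section Moments

variable {ι : Type*} [Fintype ι] {μ : Measure (ι → ℝ)} {f : (ι → ℝ) → ℝ}

theorem integrable_mul_dotProduct_mulVec (hf : ∀ j, Integrable (fun x => f x * x j) μ)
    (A : Matrix ι ι ℝ) (v : ι → ℝ) : Integrable (fun x => f x * (v ⬝ᵥ A *ᵥ x)) μ := by
  simp_rw [dotProduct_mulVec, dotProduct, Finset.mul_sum]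
  exact integrable_finsetSum _ fun j _ => by
    simpa only [mul_left_comm] using (hf j).const_mul ((v ᵥ* A) j)

theorem integrable_of_integrable_mul_apply [IsFiniteMeasure μ] (hf : Continuous f)
    (hmom : ∀ j, Integrable (fun x => f x * x j) μ) : Integrable f μ := by
  obtain ⟨M, hM⟩ := (isCompact_closedBall (0 : ι → ℝ) 1).exists_bound_of_continuousOn
    hf.continuousOn
  refine ((integrable_const M).add (integrable_finsetSum Finset.univ
    fun j _ => (hmom j).norm)).mono' hf.aestronglyMeasurable (ae_of_all _ fun x => ?_)
  have hsum : 0 ≤ ∑ j, ‖f x * x j‖ := Finset.sum_nonneg fun j _ => norm_nonneg _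
  by_cases hx : x ∈ Metric.closedBall (0 : ι → ℝ) 1
  · exact (hM x hx).trans (le_add_of_nonneg_right hsum)
  obtain ⟨j, hj⟩ : ∃ j, 1 < ‖x j‖ := by
    simpa [pi_norm_le_iff_of_nonneg zero_le_one] using hx
  have hM0 : 0 ≤ M := (norm_nonneg _).trans (hM 0 (Metric.mem_closedBall_self zero_le_one))
  calc ‖f x‖ ≤ ‖f x * x j‖ := by
        rw [norm_mul]
        exact le_mul_of_one_le_right (norm_nonneg _) hj.le
    _ ≤ ∑ j, ‖f x * x j‖ :=
      Finset.single_le_sum (f := fun j => ‖f x * x j‖) (fun _ _ => norm_nonneg _)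
        (Finset.mem_univ j)
    _ ≤ M + ∑ j, ‖f x * x j‖ := le_add_of_nonneg_left hM0

end Moments

section Gaussian

variable {ι : Type*} [Fintype ι] [DecidableEq ι] {S : Matrix ι ι ℝ}

noncomputable def gaussianDensity (S : Matrix ι ι ℝ) (x : ι → ℝ) : ℝ :=
  Real.exp (-(1 / 2) * (x ⬝ᵥ S⁻¹ *ᵥ x)) / Real.sqrt ((2 * Real.pi) ^ Fintype.card ι * S.det)

noncomputable def gaussianMeasure (S : Matrix ι ι ℝ) : Measure (ι → ℝ) :=
  volume.withDensity fun x => ENNReal.ofReal (gaussianDensity S x)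

theorem gaussianDensity_pos (hS : S.PosDef) (x : ι → ℝ) : 0 < gaussianDensity S x := by
  unfold gaussianDensity
  have := hS.det_pos
  positivity

theorem continuous_gaussianDensity (S : Matrix ι ι ℝ) : Continuous (gaussianDensity S) := by
  unfold gaussianDensity
  fun_prop

theorem integrable_gaussianDensity (hS : S.PosDef) : Integrable (gaussianDensity S) := by
  obtain ⟨c, hc, hcoer⟩ := hS.inv.exists_pos_mul_sum_sq_le
  -- `gaussianDensity S` is dominated by a product of one-dimensional Gaussians
  have hprod : Integrable (fun x : ι → ℝ => ∏ i, Real.exp (-(c / 2) * x i ^ 2)) :=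
    Integrable.fintype_prod (f := fun _ t => Real.exp (-(c / 2) * t ^ 2))
      fun _ => integrable_exp_neg_mul_sq (half_pos hc)
  refine (hprod.div_const (Real.sqrt ((2 * Real.pi) ^ Fintype.card ι * S.det))).mono'
    (continuous_gaussianDensity S).aestronglyMeasurable (ae_of_all _ fun x => ?_)
  rw [Real.norm_of_nonneg (gaussianDensity_pos hS x).le, gaussianDensity, ← Real.exp_sum]
  gcongr
  rw [← Finset.mul_sum]
  linarith [hcoer x]

theorem isFiniteMeasure_gaussianMeasure (hS : S.PosDef) : IsFiniteMeasure (gaussianMeasure S) :=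
  isFiniteMeasure_withDensity_ofReal (integrable_gaussianDensity hS).hasFiniteIntegral

theorem integrable_gaussianMeasure_iff (hS : S.PosDef) {φ : (ι → ℝ) → ℝ} :
    Integrable φ (gaussianMeasure S) ↔ Integrable (fun x => φ x * gaussianDensity S x) :=
  integrable_withDensity_ofReal_iff (continuous_gaussianDensity S).measurable
    fun x => (gaussianDensity_pos hS x).le

theorem integral_gaussianMeasure (hS : S.PosDef) (φ : (ι → ℝ) → ℝ) :
    ∫ x, φ x ∂gaussianMeasure S = ∫ x, φ x * gaussianDensity S x :=
  integral_withDensity_ofReal (continuous_gaussianDensity S).measurable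
    (fun x => (gaussianDensity_pos hS x).le) φ

theorem hasLineDerivAt_gaussianDensity (hS : S.IsSymm) (x v : ι → ℝ) :
    HasLineDerivAt ℝ (gaussianDensity S) (-(v ⬝ᵥ S⁻¹ *ᵥ x) * gaussianDensity S x) x v := by
  have hq := (hasLineDerivAt_dotProduct_mulVec S⁻¹ x v).const_mul (-(1 / 2) : ℝ) |>.exp
    |>.div_const (Real.sqrt ((2 * Real.pi) ^ Fintype.card ι * S.det))
  rw [hS.inv.dotProduct_mulVec_comm x v] at hq
  exact hq.congr_deriv (by simp [gaussianDensity]; ring)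

theorem integral_mul_dotProduct_inv_mulVec_gaussianMeasure (hS : S.PosDef)
    {f : (ι → ℝ) → ℝ} (hf : Differentiable ℝ f)
    (hmom : ∀ j, Integrable (fun x => f x * x j) (gaussianMeasure S)) (v : ι → ℝ)
    (hderiv : Integrable (fun x => fderiv ℝ f x v) (gaussianMeasure S)) :
    ∫ x, f x * (v ⬝ᵥ S⁻¹ *ᵥ x) ∂gaussianMeasure S = ∫ x, fderiv ℝ f x v ∂gaussianMeasure S := by
  have := isFiniteMeasure_gaussianMeasure hS
  have hS_symm : S.IsSymm := isHermitian_iff_isSymm.1 hS.isHermitian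
  rw [integral_gaussianMeasure hS, integral_gaussianMeasure hS]
  have ibp := integral_bilinear_hasLineDerivAt_right_eq_neg_left_of_integrable
    (B := ContinuousLinearMap.mul ℝ ℝ) (f := f) (g := gaussianDensity S)
    (g' := fun x => -(v ⬝ᵥ S⁻¹ *ᵥ x) * gaussianDensity S x)
    ((integrable_gaussianMeasure_iff hS).1 hderiv)
    (by simpa [mul_assoc] using ((integrable_gaussianMeasure_iff hS).1
      (integrable_mul_dotProduct_mulVec hmom S⁻¹ v)).neg)
    ((integrable_gaussianMeasure_iff hS).1
      (integrable_of_integrable_mul_apply hf.continuous hmom))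
    (fun x _ => (hf x).hasFDerivAt.hasLineDerivAt v)
    (fun x _ => hasLineDerivAt_gaussianDensity hS_symm x v)
  simpa [mul_assoc, integral_neg] using ibp

end Gaussian

/-- Stein's identity: for a Gaussian random vector `ε ~ N(0, Σ)` on `ℝ^h`
(defined by its density with respect to Lebesgue measure) with `Σ` positive
definite, and a `C¹` function `g : ℝ^h → ℝ^m` whose relevant expectations exist,
`E[g(ε) εᵀ] = E[J_g(ε)] Σ` entrywise, where `J_g` is the Jacobian of `g`. -/
theorem stein_identity {h m : ℕ}
    (S : Matrix (Fin h) (Fin h) ℝ) (hS : S.PosDef)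
    (μ : Measure (Fin h → ℝ))
    (hμ : μ = volume.withDensity fun x => ENNReal.ofReal
      (Real.exp (-(1 / 2) * (x ⬝ᵥ S⁻¹.mulVec x)) /
        Real.sqrt ((2 * Real.pi) ^ h * S.det)))
    (g : (Fin h → ℝ) → (Fin m → ℝ)) (hg : ContDiff ℝ 1 g)
    (hint₁ : ∀ (i : Fin m) (j : Fin h), Integrable (fun x => g x i * x j) μ)
    (hint₂ : ∀ (i : Fin m) (k : Fin h),
      Integrable (fun x => fderiv ℝ (fun y => g y i) x (Pi.single k 1)) μ) :
    ∀ (i : Fin m) (j : Fin h),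
      ∫ x, g x i * x j ∂μ =
        ∑ k, (∫ x, fderiv ℝ (fun y => g y i) x (Pi.single k 1) ∂μ) * S k j := by
  intro i j
  obtain rfl : μ = gaussianMeasure S := by simp [hμ, gaussianMeasure, gaussianDensity]
  have hgi : Differentiable ℝ fun y => g y i := (contDiff_pi.1 hg i).differentiable one_ne_zero
  have hS_symm : S.IsSymm := isHermitian_iff_isSymm.1 hS.isHermitian
  have hx (x : Fin h → ℝ) : x j = ∑ k, (Pi.single k 1 ⬝ᵥ S⁻¹ *ᵥ x) * S k j := by
    have hSinv : S * S⁻¹ = 1 := S.mul_nonsing_inv (isUnit_iff_ne_zero.2 hS.det_pos.ne')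
    simp only [single_one_dotProduct]
    change x j = ((S⁻¹ *ᵥ x) ᵥ* S) j
    rw [← mulVec_transpose, hS_symm.eq, mulVec_mulVec, hSinv, one_mulVec]
  calc ∫ x, g x i * x j ∂gaussianMeasure S
      = ∫ x, ∑ k, g x i * (Pi.single k 1 ⬝ᵥ S⁻¹ *ᵥ x) * S k j ∂gaussianMeasure S := by
        congr 1 with x
        rw [hx x, Finset.mul_sum]
        exact Finset.sum_congr rfl fun k _ => by ring
    _ = ∑ k, (∫ x, g x i * (Pi.single k 1 ⬝ᵥ S⁻¹ *ᵥ x) ∂gaussianMeasure S) * S k j := by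
        rw [integral_finsetSum _ fun k _ =>
          (integrable_mul_dotProduct_mulVec (hint₁ i) S⁻¹ _).mul_const _]
        simp_rw [integral_mul_const]
    _ = _ := by
        simp_rw [integral_mul_dotProduct_inv_mulVec_gaussianMeasure hS hgi (hint₁ i) _ (hint₂ i _)]
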